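/- For every w ∈ W, the inversion set N(w) is separable: cone(N(w)) ∩ cone(Φ⁺ \ N(w)) = {0}. -/

import Mathlib

open Pointwise

noncomputable section

/-- The set of nonnegative linear combinations of elements of `X`. -/
def coneOf {V : Type*} [AddCommGroup V] [Module ℝ V] (X : Set V) : Set V :=
  {v | ∃ (n : ℕ) (c : Fin n → ℝ) (f : Fin n → V),
    (∀ i, 0 ≤ c i) ∧ (∀ i, f i ∈ X) ∧ ∑ i, c i • f i = v}

/-- A geometric representation of the Coxeter system `cs` on the real quadratic
space `(V, bil)`: each simple generator acts as the `bil`-reflection in its simple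
root, and the simple roots form a simple system. -/
structure GeomRep {B : Type*} [Fintype B] {W : Type*} [Group W]
    (M : CoxeterMatrix B) (cs : CoxeterSystem M W)
    (V : Type*) [AddCommGroup V] [Module ℝ V] where
  /-- the symmetric bilinear form -/
  bil : LinearMap.BilinForm ℝ V
  bil_symm : ∀ u v : V, bil u v = bil v u
  /-- the representation of `W` by linear automorphisms of `V` -/
  π : W →* (V ≃ₗ[ℝ] V)
  /-- the simple roots -/
  α : B → V
  norm_one : ∀ i, bil (α i) (α i) = 1
  simple_refl : ∀ i v, π (cs.simple i) v = v - (2 * bil (α i) v) • α i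
  pos_indep : ∀ c : B → ℝ, (∀ i, 0 ≤ c i) → ∑ i, c i • α i = 0 → ∀ i, c i = 0
  angle_finite : ∀ i j, i ≠ j → M.M i j ≠ 0 →
    bil (α i) (α j) = - Real.cos (Real.pi / (M.M i j : ℝ))
  angle_infinite : ∀ i j, i ≠ j → M.M i j = 0 → bil (α i) (α j) ≤ -1

namespace GeomRep

variable {B : Type*} [Fintype B] {W : Type*} [Group W]
  {M : CoxeterMatrix B} {cs : CoxeterSystem M W}
  {V : Type*} [AddCommGroup V] [Module ℝ V]

/-- The root system `Φ = W(Δ)`. -/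
def Phi (G : GeomRep M cs V) : Set V := {v | ∃ (w : W) (i : B), G.π w (G.α i) = v}

/-- The positive roots `Φ⁺ = cone(Δ) ∩ Φ`. -/
def PhiPos (G : GeomRep M cs V) : Set V := G.Phi ∩ coneOf (Set.range G.α)

/-- The (left) inversion set `N(w) = Φ⁺ ∩ w(Φ⁻)`. -/
def N (G : GeomRep M cs V) (w : W) : Set V := G.PhiPos ∩ (G.π w '' (-G.PhiPos))

/-- `A ⊆ Φ⁺` is closed if for all `α, β ∈ A`, every root in `cone(α,β)` lies in `A`. -/
def IsClosedSet (G : GeomRep M cs V) (A : Set V) : Prop :=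
  ∀ a ∈ A, ∀ b ∈ A, coneOf {a, b} ∩ G.Phi ⊆ A

/-- `A` is biclosed if `A` and `Φ⁺ \ A` are both closed. -/
def IsBiclosed (G : GeomRep M cs V) (A : Set V) : Prop :=
  G.IsClosedSet A ∧ G.IsClosedSet (G.PhiPos \ A)

/-- `A` is convex if `A = cone(A) ∩ Φ`. -/
def IsConvexSet (G : GeomRep M cs V) (A : Set V) : Prop :=
  A = coneOf A ∩ G.Phi

/-- `A` is biconvex if `A` and `Φ⁺ \ A` are both convex. -/
def IsBiconvex (G : GeomRep M cs V) (A : Set V) : Prop :=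
  G.IsConvexSet A ∧ G.IsConvexSet (G.PhiPos \ A)

/-- `A ⊆ Φ⁺` is separable if `cone(A) ∩ cone(Φ⁺ \ A) = {0}`. -/
def IsSeparable (G : GeomRep M cs V) (A : Set V) : Prop :=
  coneOf A ∩ coneOf (G.PhiPos \ A) = {0}

end GeomRep

/-- The right weak order on a Coxeter group. -/
def WeakLE {B : Type*} {W : Type*} [Group W] {M : CoxeterMatrix B}
    (cs : CoxeterSystem M W) (u w : W) : Prop :=
  cs.length u + cs.length (u⁻¹ * w) = cs.length w

/-!
Every root is a nonnegative or a nonpositive combination of simple roots. This is Humphreys'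
argument: if `s_i` is not a right descent of `w`, pick a right descent `s_j` and write
`w = v u` with `u` in the dihedral subgroup `⟨s_i, s_j⟩`, `ℓ w = ℓ v + ℓ u`, and neither `s_i`
nor `s_j` a right descent of `v`. Then `u` is an alternating word shorter than `m_ij`, so `u α_i`
is a combination of `α_i, α_j` whose coefficients are values of Chebyshev polynomials `U_n` at
`-B(α_i, α_j)`, hence nonnegative; and `v α_i`, `v α_j` are positive by induction on length.

Consequently `w⁻¹` maps `N(w)` into `-Φ⁺` and `Φ⁺ \ N(w)` into `Φ⁺`, so it sends a common point
of the two cones into `cone(Δ) ∩ -cone(Δ)`, which is `{0}` by positive independence of `Δ`.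
-/

section Cone

variable {V V' : Type*} [AddCommGroup V] [Module ℝ V] [AddCommGroup V'] [Module ℝ V']

theorem coneOf_eq_hull (X : Set V) : coneOf X = PointedCone.hull ℝ X := by
  ext v
  rw [SetLike.mem_coe, Submodule.mem_span_set']
  constructor
  · rintro ⟨n, c, f, hc, hf, rfl⟩
    exact ⟨n, fun i => ⟨c i, hc i⟩, fun i => ⟨f i, hf i⟩, rfl⟩
  · rintro ⟨n, c, f, rfl⟩
    exact ⟨n, fun i => c i, fun i => f i, fun i => (c i).2, fun i => (f i).2, rfl⟩

theorem subset_coneOf (X : Set V) : X ⊆ coneOf X := by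
  rw [coneOf_eq_hull]; exact PointedCone.subset_hull

theorem coneOf_subset_coneOf {X Y : Set V} (h : X ⊆ coneOf Y) : coneOf X ⊆ coneOf Y := by
  rw [coneOf_eq_hull] at h
  rw [coneOf_eq_hull, coneOf_eq_hull]
  exact Submodule.span_le.mpr h

theorem smul_add_smul_mem_coneOf {X : Set V} {a b : ℝ} {x y : V} (ha : 0 ≤ a) (hb : 0 ≤ b)
    (hx : x ∈ coneOf X) (hy : y ∈ coneOf X) : a • x + b • y ∈ coneOf X := by
  rw [coneOf_eq_hull] at hx hy ⊢
  exact add_mem (PointedCone.smul_mem _ ha hx) (PointedCone.smul_mem _ hb hy)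

theorem coneOf_mapsTo (f : V →ₗ[ℝ] V') {X : Set V} {Y : Set V'} (h : Set.MapsTo f X (coneOf Y)) :
    Set.MapsTo f (coneOf X) (coneOf Y) := by
  rintro _ ⟨n, c, g, hc, hg, rfl⟩
  refine coneOf_subset_coneOf h.image_subset ⟨n, c, f ∘ g, hc, fun i => ⟨g i, hg i, rfl⟩, ?_⟩
  simp

theorem zero_mem_coneOf (X : Set V) : (0 : V) ∈ coneOf X := by
  rw [coneOf_eq_hull]; exact zero_mem _

end Cone

namespace Polynomial.Chebyshev

open Real

theorem U_eval_add_one (x : ℝ) (n : ℤ) :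
    (U ℝ (n + 1)).eval x = 2 * x * (U ℝ n).eval x - (U ℝ (n - 1)).eval x := by
  simp [U_add_one]

theorem U_eval_eq (x : ℝ) (n : ℤ) :
    (U ℝ n).eval x = 2 * x * (U ℝ (n - 1)).eval x - (U ℝ (n - 2)).eval x := by
  simp [U_eq ℝ n]

theorem U_eval_nonneg_of_one_le {x : ℝ} (hx : 1 ≤ x) {n : ℤ} (hn : -1 ≤ n) :
    0 ≤ (U ℝ n).eval x := by
  have key : ∀ k : ℕ, 0 ≤ (U ℝ (k - 1)).eval x ∧ (U ℝ (k - 1)).eval x ≤ (U ℝ k).eval x := by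
    intro k
    induction k with
    | zero => simp
    | succ k ih =>
      push_cast
      rw [add_sub_cancel_right, U_eval_add_one]
      constructor <;> nlinarith [ih.1, ih.2]
  obtain ⟨k, rfl⟩ : ∃ k : ℕ, n = k - 1 := ⟨(n + 1).toNat, by omega⟩
  exact (key k).1

theorem U_eval_cos_pi_div_nonneg {m : ℕ} (hm : 2 ≤ m) {n : ℤ} (hn₁ : -1 ≤ n) (hn₂ : n + 1 ≤ m) :
    0 ≤ (U ℝ n).eval (cos (π / m)) := by
  have hm₀ : (0 : ℝ) < m := by positivity
  have hsjn : 0 < sin (π / m) := by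
    apply sin_pos_of_pos_of_lt_pi (by positivity)
    rw [div_lt_iff₀ hm₀]
    nlinarith [pi_pos, show (2 : ℝ) ≤ m by exact_mod_cast hm]
  have hprod : 0 ≤ (U ℝ n).eval (cos (π / m)) * sin (π / m) := by
    rw [U_real_cos]
    have h₁ : (0 : ℝ) ≤ n + 1 := by exact_mod_cast (by omega : (0 : ℤ) ≤ n + 1)
    have h₂ : ((n : ℝ) + 1) ≤ m := by exact_mod_cast hn₂
    apply sin_nonneg_of_nonneg_of_le_pi (by positivity)
    calc ((n : ℝ) + 1) * (π / m) ≤ m * (π / m) := by gcongr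
      _ = π := by field_simp
  exact nonneg_of_mul_nonneg_left hprod hsjn

end Polynomial.Chebyshev

namespace CoxeterSystem

variable {B : Type*} {W : Type*} [Group W] {M : CoxeterMatrix B} (cs : CoxeterSystem M W)

theorem isReduced_of_length_mul_wordProd {v : W} {ω : List B}
    (h : cs.length (v * cs.wordProd ω) = cs.length v + ω.length) : cs.IsReduced ω := by
  have h₁ := cs.length_mul_le v (cs.wordProd ω)
  have h₂ := cs.length_wordProd_le ω
  unfold IsReduced
  omega

theorem exists_mul_wordProd_pair (i j : B) (w : W) :
    ∃ v ω, (∀ k ∈ ω, k = i ∨ k = j) ∧ v * cs.wordProd ω = w ∧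
      cs.length v + ω.length = cs.length w ∧ ¬cs.IsRightDescent v i ∧
      ¬cs.IsRightDescent v j := by
  induction hn : cs.length w using Nat.strong_induction_on generalizing w with
  | _ n ih =>
  by_cases hdesc : ∃ k, (k = i ∨ k = j) ∧ cs.IsRightDescent w k
  · obtain ⟨k, hk, hwk⟩ := hdesc
    have hlen := cs.isRightDescent_iff.mp hwk
    obtain ⟨v, ω, hω, hvω, hl, hvi, hvj⟩ := ih _ (by omega) (w * cs.simple k) rfl
    refine ⟨v, ω ++ [k], ?_, ?_, ?_, hvi, hvj⟩
    · simpa [or_imp, forall_and] using ⟨hω, hk⟩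
    · rw [wordProd_append, wordProd_singleton, ← mul_assoc, hvω, simple_mul_simple_cancel_right]
    · simp only [List.length_append, List.length_singleton]
      omega
  · push Not at hdesc
    exact ⟨w, [], by simp, by simp, by simp [hn], hdesc i (Or.inl rfl), hdesc j (Or.inr rfl)⟩

theorem eq_alternatingWord_of_isReduced_append {i j : B} (hij : i ≠ j) {ω : List B}
    (hω : ∀ k ∈ ω, k = i ∨ k = j) (hred : cs.IsReduced (ω ++ [i])) :
    ω = alternatingWord i j ω.length := by
  induction ω using List.reverseRecOn generalizing i j with
  | nil => rfl
  | append_singleton χ k ih =>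
    have hk : k = j := by
      refine (hω k (by simp)).resolve_left ?_
      rintro rfl
      have := cs.length_wordProd_le χ
      unfold IsReduced at hred
      rw [wordProd_append, wordProd_append, wordProd_singleton, mul_assoc,
        simple_mul_simple_self, mul_one] at hred
      simp only [List.length_append, List.length_singleton] at hred
      omega
    subst hk
    have hχ := ih hij.symm (fun l hl => (hω l (by simp [hl])).symm)
      (by simpa only [List.take_left' (by simp : (χ ++ [k]).length = χ.length + 1)]
        using hred.take (χ.length + 1))
    rw [List.length_append, List.length_singleton, alternatingWord_succ, ← hχ,
      List.concat_eq_append]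

end CoxeterSystem

namespace GeomRep

open CoxeterSystem Polynomial.Chebyshev

variable {B : Type*} [Fintype B] {W : Type*} [Group W]
  {M : CoxeterMatrix B} {cs : CoxeterSystem M W}
  {V : Type*} [AddCommGroup V] [Module ℝ V] (G : GeomRep M cs V)

theorem pi_mul_apply (u v : W) (x : V) : G.π (u * v) x = G.π u (G.π v x) := by
  rw [map_mul]; rfl

theorem pi_simple_apply_self (i : B) : G.π (cs.simple i) (G.α i) = -G.α i := by
  rw [G.simple_refl, G.norm_one]
  module

theorem pi_alternatingWord_apply {i j : B} {x : ℝ} (hx : G.bil (G.α i) (G.α j) = -x) (m : ℕ) :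
    G.π (cs.wordProd (alternatingWord i j m)) (G.α i) =
        (U ℝ m).eval x • G.α (if Even m then i else j) +
          (U ℝ (m - 1)).eval x • G.α (if Even m then j else i) ∧
      G.π (cs.wordProd (alternatingWord i j m)) (G.α j) =
        -((U ℝ (m - 2)).eval x • G.α (if Even m then j else i) +
          (U ℝ (m - 1)).eval x • G.α (if Even m then i else j)) := by
  induction m generalizing i j with
  | zero => simp [alternatingWord]
  | succ m ih =>
    obtain ⟨ih_j, ih_i⟩ := ih (i := j) (j := i) (by rw [G.bil_symm, hx])
    have hsj : G.π (cs.simple j) (G.α i) = G.α i + (2 * x) • G.α j := by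
      rw [G.simple_refl, G.bil_symm, hx]; module
    simp only [alternatingWord_succ, wordProd_concat, G.pi_mul_apply, hsj,
      G.pi_simple_apply_self, map_add, map_smul, map_neg, ih_i, ih_j]
    push_cast
    rw [add_sub_cancel_right, show (m : ℤ) + 1 - 2 = m - 1 by ring, U_eval_add_one]
    simp only [Nat.even_add_one, ite_not]
    constructor
    · rw [U_eval_eq x m]
      module
    · module

theorem pi_alternatingWord_apply_mem_coneOf {i j : B} (hij : i ≠ j) {m : ℕ}
    (hm : M i j = 0 ∨ m + 1 ≤ M i j) :
    G.π (cs.wordProd (alternatingWord i j m)) (G.α i) ∈ coneOf {G.α i, G.α j} := by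
  obtain ⟨x, hx, hU₀, hU₁⟩ : ∃ x, G.bil (G.α i) (G.α j) = -x ∧
      0 ≤ (U ℝ m).eval x ∧ 0 ≤ (U ℝ (m - 1)).eval x := by
    rcases hm with hm | hm
    · have hx : 1 ≤ -G.bil (G.α i) (G.α j) := by linarith [G.angle_infinite i j hij hm]
      exact ⟨_, (neg_neg _).symm, U_eval_nonneg_of_one_le hx (by omega),
        U_eval_nonneg_of_one_le hx (by omega)⟩
    · have hM₂ : 2 ≤ M i j := by have := M.off_diagonal i j hij; omega
      exact ⟨_, G.angle_finite i j hij (by omega),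
        U_eval_cos_pi_div_nonneg hM₂ (by omega) (by omega),
        U_eval_cos_pi_div_nonneg hM₂ (by omega) (by omega)⟩
  rw [(G.pi_alternatingWord_apply hx m).1]
  refine smul_add_smul_mem_coneOf hU₀ hU₁ (subset_coneOf _ ?_) (subset_coneOf _ ?_) <;>
    split_ifs <;> simp

theorem pi_apply_alpha_mem_coneOf_of_not_isRightDescent {w : W} {i : B}
    (h : ¬cs.IsRightDescent w i) : G.π w (G.α i) ∈ coneOf (Set.range G.α) := by
  induction hn : cs.length w using Nat.strong_induction_on generalizing w i with
  | _ n ih =>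
  obtain rfl | hw := eq_or_ne w 1
  · simpa using subset_coneOf _ (Set.mem_range_self i)
  obtain ⟨j, hj⟩ := cs.exists_rightDescent_of_ne_one hw
  have hij : i ≠ j := by rintro rfl; exact h hj
  obtain ⟨v, ω, hω, rfl, hlen, hvi, hvj⟩ := cs.exists_mul_wordProd_pair i j w
  have hred : cs.IsReduced (ω ++ [i]) := by
    apply cs.isReduced_of_length_mul_wordProd (v := v)
    rw [wordProd_append, wordProd_singleton, ← mul_assoc, cs.not_isRightDescent_iff.mp h,
      List.length_append, List.length_singleton]
    omega
  have hω_alt := cs.eq_alternatingWord_of_isReduced_append hij hω hred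
  have hv : cs.length v < n := by
    have hω₀ : ω ≠ [] := by rintro rfl; exact hvj (by simpa using hj)
    have := List.length_pos_iff.mpr hω₀
    omega
  have hbound : M i j = 0 ∨ ω.length + 1 ≤ M i j := by
    by_contra! hM
    rw [hω_alt, ← List.concat_eq_append, ← alternatingWord_succ] at hred
    exact cs.not_isReduced_alternatingWord j i (by rw [M.symmetric]; exact hM.1)
      (by rw [M.symmetric]; omega) hred
  have hdihedral := G.pi_alternatingWord_apply_mem_coneOf hij hbound
  rw [← hω_alt] at hdihedral
  have hv_pos : Set.MapsTo (G.π v) {G.α i, G.α j} (coneOf (Set.range G.α)) := by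
    rintro _ (rfl | rfl)
    exacts [ih _ hv hvi rfl, ih _ hv hvj rfl]
  rw [G.pi_mul_apply]
  exact coneOf_mapsTo (G.π v).toLinearMap hv_pos hdihedral

theorem pi_inv_apply_pi (w : W) (x : V) : G.π w⁻¹ (G.π w x) = x := by
  rw [← G.pi_mul_apply, inv_mul_cancel, map_one]; rfl

theorem pi_apply_pi_inv (w : W) (x : V) : G.π w (G.π w⁻¹ x) = x := by
  rw [← G.pi_mul_apply, mul_inv_cancel, map_one]; rfl

theorem pi_mem_Phi (u : W) {v : V} (hv : v ∈ G.Phi) : G.π u v ∈ G.Phi := by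
  obtain ⟨w, i, rfl⟩ := hv
  exact ⟨u * w, i, G.pi_mul_apply u w _⟩

theorem neg_mem_Phi {v : V} (hv : v ∈ G.Phi) : -v ∈ G.Phi := by
  obtain ⟨w, i, rfl⟩ := hv
  exact ⟨w * cs.simple i, i, by rw [G.pi_mul_apply, G.pi_simple_apply_self, map_neg]⟩

theorem mem_coneOf_or_neg_mem_coneOf_of_mem_Phi {v : V} (hv : v ∈ G.Phi) :
    v ∈ coneOf (Set.range G.α) ∨ -v ∈ coneOf (Set.range G.α) := by
  obtain ⟨w, i, rfl⟩ := hv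
  by_cases h : cs.IsRightDescent w i
  · right
    have h' := cs.isRightDescent_iff_not_isRightDescent_mul.mp h
    simpa [G.pi_mul_apply, G.pi_simple_apply_self] using
      G.pi_apply_alpha_mem_coneOf_of_not_isRightDescent h'
  · exact Or.inl (G.pi_apply_alpha_mem_coneOf_of_not_isRightDescent h)

theorem eq_zero_of_mem_coneOf_of_neg_mem {v : V} (hv : v ∈ coneOf (Set.range G.α))
    (hv' : -v ∈ coneOf (Set.range G.α)) : v = 0 := by
  rw [coneOf_eq_hull, SetLike.mem_coe, Submodule.mem_span_range_iff_exists_fun] at hv hv'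
  obtain ⟨c, rfl⟩ := hv
  obtain ⟨d, hd⟩ := hv'
  have hsum : ∑ k, ((c k : ℝ) + d k) • G.α k = 0 := by
    simp only [add_smul, Finset.sum_add_distrib]
    change ∑ k, c k • G.α k + ∑ k, d k • G.α k = 0
    rw [hd, add_neg_cancel]
  have hcd := G.pos_indep _ (fun k => add_nonneg (c k).2 (d k).2) hsum
  have hc : ∀ k, c k = 0 := fun k =>
    Subtype.ext (show (c k : ℝ) = 0 by linarith [(c k).2, (d k).2, hcd k])
  simp [hc]

theorem neg_pi_inv_mem_PhiPos_of_mem_N {w : W} {r : V} (hr : r ∈ G.N w) :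
    -G.π w⁻¹ r ∈ G.PhiPos := by
  obtain ⟨-, z, hz, rfl⟩ := hr
  rwa [G.pi_inv_apply_pi]

theorem pi_inv_mem_PhiPos_of_mem_diff_N {w : W} {r : V} (hr : r ∈ G.PhiPos \ G.N w) :
    G.π w⁻¹ r ∈ G.PhiPos := by
  have hΦ := G.pi_mem_Phi w⁻¹ hr.1.1
  refine ⟨hΦ, (G.mem_coneOf_or_neg_mem_coneOf_of_mem_Phi hΦ).resolve_right fun hneg => hr.2 ?_⟩
  exact ⟨hr.1, _, ⟨G.neg_mem_Phi hΦ, hneg⟩, G.pi_apply_pi_inv w r⟩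

end GeomRep

/-- For every `w ∈ W`, the inversion set `N(w)` is separable. -/
theorem stmt10 {B : Type*} [Fintype B] {W : Type*} [Group W]
    {M : CoxeterMatrix B} {cs : CoxeterSystem M W}
    {V : Type*} [AddCommGroup V] [Module ℝ V] (G : GeomRep M cs V)
    (w : W) : G.IsSeparable (G.N w) := by
  refine Set.Subset.antisymm ?_ (by simp [zero_mem_coneOf])
  rintro x ⟨hxN, hxC⟩
  have hneg : -G.π w⁻¹ x ∈ coneOf (Set.range G.α) :=
    coneOf_mapsTo (-(G.π w⁻¹).toLinearMap)
      (fun r hr => (G.neg_pi_inv_mem_PhiPos_of_mem_N hr).2) hxN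
  have hpos : G.π w⁻¹ x ∈ coneOf (Set.range G.α) :=
    coneOf_mapsTo (G.π w⁻¹).toLinearMap
      (fun r hr => (G.pi_inv_mem_PhiPos_of_mem_diff_N hr).2) hxC
  simpa using G.eq_zero_of_mem_coneOf_of_neg_mem hpos hneg
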